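/- arXiv:1410.6754 — 3 statements merged into one kernel-verified Lean document; each statement's English description precedes it below -/
import Mathlib

section
/- Let s₁,…,s_m be bucket sizes (natural numbers, m ≥ 1) and let r ≥ 1. Let L* be the minimum, over all partitions of the buckets into at most r consecutive groups, of the maximum total size of a group. Then for every bound L with L ≥ max_i sᵢ, the scanning algorithm succeeds for bound L and group count r if and only if L ≥ L*. In particular, binary search over L combined with the scanning algorithm finds the optimal bound L*. -/
/-! Greedy stays ahead. Let `P` be any partition of the buckets into nonempty groups of total
size at most `L`. Its first group is a prefix of size at most `L`, hence no longer than the first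
greedy group; cutting the rest of `P` at the end of the greedy group still leaves a partition of
the remaining buckets into at most `P.length - 1` such groups. So the scan uses the fewest possible
groups, and it fits into `r` groups exactly when some partition into at most `r` groups has all
totals at most `L`, i.e. when `L* ≤ L`. -/

/-- The length of the longest prefix of `s` whose sum is at most `L`. -/
def greedyLen (L : ℕ) (s : List ℕ) : ℕ :=
  ((List.range (s.length + 1)).filter (fun j => (s.take j).sum ≤ L)).foldr max 0

/-- The scanning (greedy) algorithm: repeatedly take as the next group the longest
prefix of the remaining buckets whose total size is at most `L`. -/
def scanGroups (L : ℕ) : List ℕ → List (List ℕ)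
  | [] => []
  | a :: t =>
      (a :: t).take (max 1 (greedyLen L (a :: t))) ::
        scanGroups L ((a :: t).drop (max 1 (greedyLen L (a :: t))))
  termination_by s => s.length
  decreasing_by
    simp only [List.length_drop, List.length_cons]
    omega

theorem sum_take_greedyLen_le (L : ℕ) (s : List ℕ) : (s.take (greedyLen L s)).sum ≤ L := by
  set l := (List.range (s.length + 1)).filter (fun j => (s.take j).sum ≤ L)
  have hl : l ≠ [] := List.ne_nil_of_mem (a := 0) (by simp [l])
  have hmem : greedyLen L s ∈ l := List.maximum_mem (List.foldr_max_of_ne_nil hl).symm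
  simpa [l] using (List.mem_filter.1 hmem).2

theorem le_greedyLen {L j : ℕ} {s : List ℕ} (hj : j ≤ s.length) (hsum : (s.take j).sum ≤ L) :
    j ≤ greedyLen L s :=
  List.le_max_of_le (List.mem_filter.2 ⟨List.mem_range.2 (by omega), by simpa using hsum⟩) le_rfl

theorem flatten_scanGroups (L : ℕ) (s : List ℕ) : (scanGroups L s).flatten = s := by
  induction s using scanGroups.induct L with
  | case1 => simp [scanGroups]
  | case2 a t ih => rw [scanGroups, List.flatten_cons, ih, List.take_append_drop]

theorem ne_nil_of_mem_scanGroups {L : ℕ} {s g : List ℕ} (hg : g ∈ scanGroups L s) : g ≠ [] := by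
  induction s using scanGroups.induct L with
  | case1 => simp [scanGroups] at hg
  | case2 a t ih =>
    rw [scanGroups, List.mem_cons] at hg
    rcases hg with rfl | hg
    · simp
    · exact ih hg

theorem sum_le_of_mem_scanGroups {L : ℕ} {s g : List ℕ} (hL : ∀ x ∈ s, x ≤ L)
    (hg : g ∈ scanGroups L s) : g.sum ≤ L := by
  induction s using scanGroups.induct L with
  | case1 => simp [scanGroups] at hg
  | case2 a t ih =>
    rw [scanGroups, List.mem_cons] at hg
    rcases hg with rfl | hg
    · have hpos : 1 ≤ greedyLen L (a :: t) := le_greedyLen (by simp) (by simpa using hL a (by simp))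
      rw [max_eq_right hpos]
      exact sum_take_greedyLen_le L (a :: t)
    · exact ih (fun x hx => hL x (List.mem_of_mem_drop hx)) hg

theorem exists_partition_drop {L : ℕ} (P : List (List ℕ)) (hne : ∀ g ∈ P, g ≠ [])
    (hsum : ∀ g ∈ P, g.sum ≤ L) (d : ℕ) :
    ∃ Q : List (List ℕ), Q.flatten = P.flatten.drop d ∧ Q.length ≤ P.length ∧
      (∀ g ∈ Q, g ≠ []) ∧ ∀ g ∈ Q, g.sum ≤ L := by
  induction P generalizing d with
  | nil => exact ⟨[], by simp⟩
  | cons g P ih =>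
    simp only [List.mem_cons, forall_eq_or_imp] at hne hsum
    by_cases hd : g.length ≤ d
    · obtain ⟨Q, hQ, hlen, hQne, hQsum⟩ := ih hne.2 hsum.2 (d - g.length)
      refine ⟨Q, ?_, hlen.trans (Nat.le_succ _), hQne, hQsum⟩
      rw [hQ, List.flatten_cons, List.drop_append, List.drop_eq_nil_of_le hd, List.nil_append]
    · refine ⟨g.drop d :: P, ?_, by simp, ?_, ?_⟩
      · rw [List.flatten_cons, List.flatten_cons, List.drop_append,
          Nat.sub_eq_zero_of_le (by omega), List.drop_zero]
      · simp only [List.mem_cons, forall_eq_or_imp]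
        exact ⟨List.ne_nil_of_length_pos (by rw [List.length_drop]; omega), hne.2⟩
      · simp only [List.mem_cons, forall_eq_or_imp]
        exact ⟨((List.drop_sublist d g).sum_le_sum fun _ _ => Nat.zero_le _).trans hsum.1, hsum.2⟩

theorem length_scanGroups_le {L : ℕ} {s : List ℕ} {P : List (List ℕ)} (hP : P.flatten = s)
    (hne : ∀ g ∈ P, g ≠ []) (hsum : ∀ g ∈ P, g.sum ≤ L) :
    (scanGroups L s).length ≤ P.length := by
  induction s using scanGroups.induct L generalizing P with
  | case1 => simp [scanGroups]
  | case2 a t ih =>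
    obtain _ | ⟨g, P⟩ := P
    · simp at hP
    simp only [List.mem_cons, forall_eq_or_imp] at hne hsum
    rw [List.flatten_cons] at hP
    set k := max 1 (greedyLen L (a :: t))
    have hg_le : g.length ≤ k := by
      refine le_max_of_le_right (le_greedyLen (by simp [← hP]) ?_)
      rw [← hP, List.take_left]; exact hsum.1
    have hdrop : (a :: t).drop k = P.flatten.drop (k - g.length) := by
      rw [← hP, List.drop_append, List.drop_eq_nil_of_le hg_le, List.nil_append]
    obtain ⟨Q, hQ, hlen, hQne, hQsum⟩ := exists_partition_drop P hne.2 hsum.2 (k - g.length)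
    rw [scanGroups, List.length_cons, List.length_cons]
    exact Nat.succ_le_succ ((ih (hQ.trans hdrop.symm) hQne hQsum).trans hlen)

theorem scanning_succeeds_iff_ge_optimum_general
    (s : List ℕ) (r : ℕ)
    (Lstar : ℕ)
    (hLstar : IsLeast {M : ℕ | ∃ P : List (List ℕ),
        P.flatten = s ∧ P.length ≤ r ∧ (∀ g ∈ P, g ≠ []) ∧
        (P.map List.sum).foldr max 0 = M} Lstar)
    (L : ℕ) (hL : ∀ x ∈ s, x ≤ L) :
    (scanGroups L s).length ≤ r ↔ Lstar ≤ L := by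
  constructor
  · intro hlen
    have hmax : ((scanGroups L s).map List.sum).foldr max 0 ≤ L :=
      List.max_le_of_forall_le _ _ <| by
        simpa using fun g hg => sum_le_of_mem_scanGroups hL hg
    have hLstar_le := hLstar.2
      ⟨_, flatten_scanGroups L s, hlen, fun _ => ne_nil_of_mem_scanGroups, rfl⟩
    exact hLstar_le.trans hmax
  · intro hLs
    obtain ⟨P, hPs, hPr, hPne, hPmax⟩ := hLstar.1
    have hsum : ∀ g ∈ P, g.sum ≤ L := fun g hg =>
      (List.le_max_of_le (List.mem_map_of_mem hg) le_rfl).trans (hPmax.le.trans hLs)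
    exact (length_scanGroups_le hPs hPne hsum).trans hPr

/-- For bucket sizes `s` (at least one bucket) and `r ≥ 1` groups, let `Lstar` be the
minimum, over all partitions of the buckets into at most `r` consecutive (nonempty)
groups, of the maximum total size of a group.  Then for every bound `L` that is at
least as large as every bucket, the scanning algorithm succeeds with at most `r`
groups iff `Lstar ≤ L`. -/
theorem scanning_succeeds_iff_ge_optimum
    (s : List ℕ) (hm : 1 ≤ s.length) (r : ℕ) (hr : 1 ≤ r)
    (Lstar : ℕ)
    (hLstar : IsLeast {M : ℕ | ∃ P : List (List ℕ),
        P.flatten = s ∧ P.length ≤ r ∧ (∀ g ∈ P, g ≠ []) ∧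
        (P.map List.sum).foldr max 0 = M} Lstar)
    (L : ℕ) (hL : ∀ x ∈ s, x ≤ L) :
    (scanGroups L s).length ≤ r ↔ Lstar ≤ L :=
  scanning_succeeds_iff_ge_optimum_general s r Lstar hLstar L hL
end

section
/- Let s₁,…,s_m be bucket sizes and let L ≥ max_i sᵢ. Let G₁,…,G_t be any partition of the buckets into consecutive groups each of total size at most L. Then for every i ≤ t, the first i groups formed by the scanning algorithm with bound L together contain at least as many buckets as G₁ ∪ … ∪ G_i; consequently the scanning algorithm with bound L partitions the buckets into at most t groups. -/
/-! The greedy algorithm stays ahead: after `i` groups it has covered at least as many buckets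
as any feasible partition after `i` groups. For the induction the partition may start `d`
buckets before the remaining input. If the greedy step takes `k` buckets and the partition's
first group is `G`, then `|G| ≤ d + k`, because `G` without its first `d` buckets is a prefix
of the input of sum at most `L`; the rest of the partition then starts `d + k - |G|` buckets
before the remaining input. -/

theorem greedyLen_le_length (L : ℕ) (s : List ℕ) : greedyLen L s ≤ s.length :=
  List.max_le_of_forall_le _ _ fun _ hj =>
    Nat.lt_succ_iff.1 (List.mem_range.1 (List.mem_filter.1 hj).1)

theorem List.IsPrefix.length_le_greedyLen {L : ℕ} {p s : List ℕ} (hp : p <+: s)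
    (hsum : p.sum ≤ L) : p.length ≤ greedyLen L s := by
  refine List.le_max_of_le' 0 (x := p.length) (List.mem_filter.2 ⟨?_, ?_⟩) le_rfl
  · exact List.mem_range.2 (Nat.lt_succ_of_le hp.length_le)
  · simpa [← List.prefix_iff_eq_take.1 hp] using hsum

theorem scanGroups_flatten (L : ℕ) : ∀ s : List ℕ, (scanGroups L s).flatten = s
  | [] => by simp [scanGroups]
  | a :: t => by
    rw [scanGroups, List.flatten_cons, scanGroups_flatten, List.take_append_drop]
  termination_by s => s.length
  decreasing_by
    simp only [List.length_drop, List.length_cons]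
    omega

theorem nil_not_mem_scanGroups (L : ℕ) : ∀ s : List ℕ, [] ∉ scanGroups L s
  | [] => by simp [scanGroups]
  | a :: t => by
    rw [scanGroups, List.mem_cons, not_or]
    refine ⟨fun h => ?_, nil_not_mem_scanGroups L _⟩
    simpa using congrArg List.length h.symm
  termination_by s => s.length
  decreasing_by
    simp only [List.length_drop, List.length_cons]
    omega

theorem length_flatten_take_le_scanGroups (L : ℕ) :
    ∀ (s : List ℕ) (P : List (List ℕ)) (d i : ℕ), P.flatten.drop d = s →
      (∀ g ∈ P, g.sum ≤ L) →
      (P.take i).flatten.length ≤ d + ((scanGroups L s).take i).flatten.length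
  | _, _, _, 0, _, _ => by simp
  | _, [], _, _ + 1, _, _ => by simp
  | [], P, d, i + 1, hP, _ => by
    have hPd : P.flatten.length ≤ d := List.drop_eq_nil_iff.1 hP
    have hi : (P.take (i + 1)).flatten.length ≤ P.flatten.length :=
      ((List.take_sublist _ _).flatten).length_le
    omega
  | a :: t, G :: P, d, i + 1, hP, hbound => by
    set k := max 1 (greedyLen L (a :: t)) with hk
    have hks : k ≤ (a :: t).length := by
      have := greedyLen_le_length L (a :: t)
      simp only [List.length_cons] at *
      omega
    have hGk : G.length ≤ d + k := by
      have hpre : G.drop d <+: a :: t := by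
        rw [← hP, List.flatten_cons, List.drop_append]
        exact List.prefix_append _ _
      have hsum : (G.drop d).sum ≤ L :=
        ((List.drop_sublist d G).sum_le_sum fun _ _ => Nat.zero_le _).trans
          (hbound G List.mem_cons_self)
      have := hpre.length_le_greedyLen hsum
      rw [List.length_drop] at this
      omega
    have hrest : P.flatten.drop (d + k - G.length) = (a :: t).drop k := by
      rw [← hP, List.drop_drop, List.flatten_cons, List.drop_append,
        List.drop_eq_nil_of_le (as := G) (by omega), List.nil_append]
    have ih := length_flatten_take_le_scanGroups L _ P (d + k - G.length) i hrest
      fun g hg => hbound g (List.mem_cons_of_mem _ hg)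
    rw [scanGroups]
    simp only [List.take_succ_cons, List.flatten_cons, List.length_append, List.length_take,
      ← hk, Nat.min_eq_left hks]
    omega
  termination_by s => s.length
  decreasing_by
    simp only [List.length_drop, List.length_cons]
    omega

theorem List.length_le_of_length_flatten_le_take {α : Type*} {Q : List (List α)} {i : ℕ}
    (hQ : [] ∉ Q) (h : Q.flatten.length ≤ (Q.take i).flatten.length) : Q.length ≤ i := by
  have hdrop : (Q.drop i).flatten = [] := by
    have := congrArg List.length (congrArg List.flatten (List.take_append_drop i Q))
    rw [List.flatten_append, List.length_append] at this
    exact List.eq_nil_of_length_eq_zero (by omega)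
  have : Q.drop i = [] := by
    rw [List.flatten_eq_nil_iff] at hdrop
    exact List.eq_nil_iff_forall_not_mem.2 fun g hg =>
      hQ (hdrop g hg ▸ List.mem_of_mem_drop hg)
  simpa using this

theorem scanning_dominates_any_partition_general
    (s : List ℕ) (L : ℕ)
    (P : List (List ℕ)) (hP : P.flatten = s)
    (hbound : ∀ g ∈ P, g.sum ≤ L) :
    (∀ i ≤ P.length,
        ((P.take i).map List.length).sum ≤
          (((scanGroups L s).take i).map List.length).sum) ∧
      (scanGroups L s).length ≤ P.length := by
  have hdom (i : ℕ) :
      (P.take i).flatten.length ≤ ((scanGroups L s).take i).flatten.length := by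
    simpa using length_flatten_take_le_scanGroups L s P 0 i (by simpa using hP) hbound
  refine ⟨fun i _ => by simpa only [List.length_flatten] using hdom i, ?_⟩
  refine List.length_le_of_length_flatten_le_take (nil_not_mem_scanGroups L s) ?_
  calc (scanGroups L s).flatten.length = (P.take P.length).flatten.length := by
        rw [scanGroups_flatten, List.take_length, hP]
    _ ≤ _ := hdom P.length

/-- Let `L ≥ max_i sᵢ` and let `P = G₁,…,G_t` be any partition of the buckets `s` into
consecutive (nonempty) groups, each of total size at most `L`.  Then for every `i ≤ t`
the first `i` groups formed by the scanning algorithm with bound `L` together contain at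
least as many buckets as `G₁ ∪ … ∪ G_i`; consequently the scanning algorithm with bound
`L` partitions the buckets into at most `t` groups. -/
theorem scanning_dominates_any_partition
    (s : List ℕ) (L : ℕ) (hmax : ∀ x ∈ s, x ≤ L)
    (P : List (List ℕ)) (hP : P.flatten = s)
    (hne : ∀ g ∈ P, g ≠ []) (hbound : ∀ g ∈ P, g.sum ≤ L) :
    (∀ i ≤ P.length,
        ((P.take i).map List.length).sum ≤
          (((scanGroups L s).take i).map List.length).sum) ∧
      (scanGroups L s).length ≤ P.length :=
  scanning_dominates_any_partition_general s L P hP hbound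
end

section
/- Let p, r be positive integers with r dividing p and let a > 0. (i) If the positions of one part are partitioned into at most p·(1 + 1/a) consecutive pieces and into p/r consecutive blocks (one per receiving PE), then the total number of (piece, block) incidences — i.e., messages for this part — is at most p·(1 + 1/r + 1/a). (ii) If moreover every piece occupies at most s consecutive positions and every block contains at least s positions, then every piece intersects at most 2 blocks, so a PE holding at most r·(1 + 1/a) pieces sends at most 2·r·(1 + 1/a) messages. -/
/-!
Along the positions both the piece index and the block index are monotone, so the
(piece, block) pairs that occur form a chain in the product order on which the coordinate sum
is injective: there are at most `m + p/r` of them. If a piece met three blocks, the middle block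
would lie strictly inside that piece, so the piece would have more than `s` positions.
-/

open Finset

section Incidences

variable {α β γ : Type*} {s : Finset α}

theorem card_image_prod_le_add_of_monotoneOn [LinearOrder α] {m k : ℕ}
    {f : α → Fin m} {g : α → Fin k} (hf : MonotoneOn f s) (hg : MonotoneOn g s) :
    (s.image fun x => (f x, g x)).card ≤ m + k := by
  have hinj : Set.InjOn (fun z : Fin m × Fin k => (z.1 : ℕ) + z.2)
      (s.image fun x => (f x, g x)) := by
    simp only [Set.InjOn, coe_image, Set.mem_image, mem_coe]
    rintro _ ⟨x, hx, rfl⟩ _ ⟨y, hy, rfl⟩ hsum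
    wlog hxy : x ≤ y generalizing x y
    · exact (this y hy x hx hsum.symm (le_of_not_ge hxy)).symm
    have hfxy : f x ≤ f y := hf hx hy hxy
    have hgxy : g x ≤ g y := hg hx hy hxy
    rw [Fin.le_def] at hfxy hgxy
    dsimp only at hsum
    ext <;> dsimp only <;> omega
  calc _ ≤ (range (m + k)).card := by
        refine card_le_card_of_injOn _ ?_ hinj
        intro z _
        simp only [coe_range, Set.mem_Iio]
        omega
    _ = m + k := card_range _

theorem filter_eq_subset_filter_eq_of_lt_of_lt [LinearOrder α] [PartialOrder β] [Preorder γ]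
    [DecidableEq β] [DecidableEq γ]
    {f : α → β} {g : α → γ} (hf : MonotoneOn f s) (hg : MonotoneOn g s) {x₁ x₂ : α}
    (hx₁ : x₁ ∈ s) (hx₂ : x₂ ∈ s) (hfx : f x₁ = f x₂) {v : γ} (h₁ : g x₁ < v) (h₂ : v < g x₂) :
    s.filter (g · = v) ⊆ s.filter (f · = f x₁) := by
  intro y hy
  obtain ⟨hys, rfl⟩ := mem_filter.1 hy
  have hxy : x₁ ≤ y := le_of_not_ge fun h => (hg hys hx₁ h).not_gt h₁
  have hyx : y ≤ x₂ := le_of_not_ge fun h => (hg hx₂ hys h).not_gt h₂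
  exact mem_filter.2 ⟨hys, le_antisymm ((hf hys hx₂ hyx).trans hfx.ge) (hf hx₁ hys hxy)⟩

theorem card_image_filter_eq_le_two [LinearOrder α] [PartialOrder β] [DecidableEq β]
    [LinearOrder γ]
    {f : α → β} {g : α → γ} (hf : MonotoneOn f s) (hg : MonotoneOn g s) {n : ℕ} (i : β)
    (hsmall : (s.filter (f · = i)).card ≤ n) (hlarge : ∀ v, n ≤ (s.filter (g · = v)).card) :
    ((s.filter (f · = i)).image g).card ≤ 2 := by
  set t := (s.filter (f · = i)).image g
  rcases t.eq_empty_or_nonempty with ht | ht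
  · simp [ht]
  suffices t ⊆ {t.min' ht, t.max' ht} from (card_le_card this).trans card_le_two
  intro v hv
  obtain ⟨x₁, hx₁, hgx₁⟩ := mem_image.1 (t.min'_mem ht)
  obtain ⟨x₂, hx₂, hgx₂⟩ := mem_image.1 (t.max'_mem ht)
  rw [mem_filter] at hx₁ hx₂
  by_contra hvt
  simp only [mem_insert, mem_singleton, not_or] at hvt
  have h₁ : g x₁ < v := hgx₁ ▸ lt_of_le_of_ne (t.min'_le v hv) (Ne.symm hvt.1)
  have h₂ : v < g x₂ := hgx₂ ▸ lt_of_le_of_ne (t.le_max' v hv) hvt.2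
  have hsub := filter_eq_subset_filter_eq_of_lt_of_lt hf hg hx₁.1 hx₂.1
    (hx₁.2.trans hx₂.2.symm) h₁ h₂
  rw [hx₁.2] at hsub
  have hssub : s.filter (g · = v) ⊂ s.filter (f · = i) :=
    (ssubset_iff_of_subset hsub).2 ⟨x₁, mem_filter.2 hx₁, fun h => h₁.ne (mem_filter.1 h).2⟩
  have := card_lt_card hssub
  have := hlarge v
  omega

theorem card_image_prod_filter_mem_le_mul [DecidableEq β] [DecidableEq γ]
    (f : α → β) (g : α → γ) (P : Finset β) {n : ℕ}
    (h : ∀ i ∈ P, ((s.filter (f · = i)).image g).card ≤ n) :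
    ((s.filter (f · ∈ P)).image fun x => (f x, g x)).card ≤ n * P.card := by
  have hsub : ((s.filter (f · ∈ P)).image fun x => (f x, g x)) ⊆
      P.biUnion fun i => ((s.filter (f · = i)).image g).image (Prod.mk i) := by
    intro z hz
    obtain ⟨x, hx, rfl⟩ := mem_image.1 hz
    rw [mem_filter] at hx
    exact mem_biUnion.2 ⟨f x, hx.2, mem_image_of_mem _ (mem_image_of_mem g (by simp [hx.1]))⟩
  calc _ ≤ _ := card_le_card hsub
    _ ≤ _ := card_biUnion_le
    _ ≤ ∑ _ ∈ P, n := sum_le_sum fun i hi => card_image_le.trans (h i hi)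
    _ = n * P.card := by rw [sum_const, smul_eq_mul, mul_comm]

end Incidences

theorem data_delivery_message_bounds_general
    (p r : ℕ)
    (a : ℝ)
    (N m : ℕ) (piece : ℕ → Fin m) (block : ℕ → Fin (p / r))
    (hpm : MonotoneOn piece (Set.Iio N)) (hbm : MonotoneOn block (Set.Iio N))
    (hm : (m : ℝ) ≤ (p : ℝ) * (1 + 1 / a)) :
    ((((Finset.range N).image (fun x => (piece x, block x))).card : ℝ)
        ≤ (p : ℝ) * (1 + 1 / (r : ℝ) + 1 / a)) ∧
    ∀ s : ℕ,
      (∀ i : Fin m, ((Finset.range N).filter (fun x => piece x = i)).card ≤ s) →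
      (∀ j : Fin (p / r), s ≤ ((Finset.range N).filter (fun x => block x = j)).card) →
      (∀ i : Fin m,
          (((Finset.range N).filter (fun x => piece x = i)).image block).card ≤ 2) ∧
      ∀ P : Finset (Fin m), (P.card : ℝ) ≤ (r : ℝ) * (1 + 1 / a) →
        (((((Finset.range N).filter (fun x => piece x ∈ P)).image
            (fun x => (piece x, block x))).card : ℝ)
          ≤ 2 * (r : ℝ) * (1 + 1 / a)) := by
  rw [← coe_range] at hpm hbm
  refine ⟨?_, fun s hsmall hlarge => ?_⟩
  · have hcard : (_ : ℝ) ≤ (m + p / r : ℕ) :=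
      Nat.cast_le.2 (card_image_prod_le_add_of_monotoneOn hpm hbm)
    have hdiv : ((p / r : ℕ) : ℝ) ≤ p / r := Nat.cast_div_le
    push_cast at hcard
    linarith [show (p : ℝ) * (1 + 1 / r + 1 / a) = p * (1 + 1 / a) + p / r by ring]
  have htwo : ∀ i : Fin m,
      (((Finset.range N).filter (fun x => piece x = i)).image block).card ≤ 2 :=
    fun i => card_image_filter_eq_le_two hpm hbm i (hsmall i) hlarge
  refine ⟨htwo, fun P hP => ?_⟩
  have hcard : (_ : ℝ) ≤ (2 * P.card : ℕ) :=
    Nat.cast_le.2 (card_image_prod_filter_mem_le_mul piece block P fun i _ => htwo i)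
  push_cast at hcard
  linarith

/-- Let `r ∣ p` and `a > 0`.  The positions `{0,…,N−1}` of one part are partitioned into
`m ≤ p·(1 + 1/a)` consecutive nonempty pieces (monotone surjective `piece`) and into
`p/r` consecutive nonempty blocks (monotone surjective `block`, one per receiving PE).

(i) The number of (piece, block) incidences — i.e. messages for this part — is at most
`p·(1 + 1/r + 1/a)`.

(ii) If moreover every piece occupies at most `s` positions and every block contains at
least `s` positions, then every piece intersects at most `2` blocks, and hence a PE
holding any set `P` of at most `r·(1 + 1/a)` pieces sends at most `2·r·(1 + 1/a)`
messages. -/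
theorem data_delivery_message_bounds
    (p r : ℕ) (hp : 0 < p) (hr : 0 < r) (hdvd : r ∣ p)
    (a : ℝ) (ha : 0 < a)
    (N m : ℕ) (piece : ℕ → Fin m) (block : ℕ → Fin (p / r))
    (hpm : MonotoneOn piece (Set.Iio N)) (hbm : MonotoneOn block (Set.Iio N))
    (hps : ∀ i : Fin m, ∃ x < N, piece x = i)
    (hbs : ∀ j : Fin (p / r), ∃ x < N, block x = j)
    (hm : (m : ℝ) ≤ (p : ℝ) * (1 + 1 / a)) :
    ((((Finset.range N).image (fun x => (piece x, block x))).card : ℝ)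
        ≤ (p : ℝ) * (1 + 1 / (r : ℝ) + 1 / a)) ∧
    ∀ s : ℕ,
      (∀ i : Fin m, ((Finset.range N).filter (fun x => piece x = i)).card ≤ s) →
      (∀ j : Fin (p / r), s ≤ ((Finset.range N).filter (fun x => block x = j)).card) →
      (∀ i : Fin m,
          (((Finset.range N).filter (fun x => piece x = i)).image block).card ≤ 2) ∧
      ∀ P : Finset (Fin m), (P.card : ℝ) ≤ (r : ℝ) * (1 + 1 / a) →
        (((((Finset.range N).filter (fun x => piece x ∈ P)).image
            (fun x => (piece x, block x))).card : ℝ)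
          ≤ 2 * (r : ℝ) * (1 + 1 / a)) :=
  data_delivery_message_bounds_general p r a N m piece block hpm hbm hm
end
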